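/- arXiv:1009.5251 — 2 statements merged into one kernel-verified Lean document; each statement's English description precedes it below -/
import Mathlib

section
/- Let (Ω, 𝓕, P) be a probability space and let L ≥ 0 be a measurable function with ∫ L dP = 1 and ∫ L log L dP < ∞. For ε > 0 set L_ε = (L + ε)/(1 + ε). Then for any ε₀ > 0 the family { L_ε log L_ε : 0 < ε ≤ ε₀ } is uniformly integrable with respect to P. -/
/-!
Writing `L_ε = t L + (1 - t)` with `t = 1/(1+ε) ∈ (0, 1]`, convexity of `x ↦ x log x` gives
`L_ε log L_ε ≤ t L log L ≤ |L log L|`, while `x log x ≥ x - 1 ≥ -1` for `x ≥ 0`. So the whole family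
is dominated by the single integrable function `|L log L| + 1`, and domination by a fixed `L¹`
function implies uniform integrability.
-/

open MeasureTheory

namespace MeasureTheory

variable {α ι β γ : Type*} {m : MeasurableSpace α} {μ : Measure α} {p : ENNReal}
  [NormedAddCommGroup β] [NormedAddCommGroup γ] {f : ι → α → β} {g : ι → α → γ}

theorem UnifIntegrable.mono (hg : UnifIntegrable g p μ)
    (hfg : ∀ i, ∀ᵐ x ∂μ, ‖f i x‖ ≤ ‖g i x‖) : UnifIntegrable f p μ := by
  intro ε hε
  obtain ⟨δ, hδ, hgδ⟩ := hg hε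
  refine ⟨δ, hδ, fun i s hs hμs => (eLpNorm_mono_ae ?_).trans (hgδ i s hs hμs)⟩
  filter_upwards [hfg i] with x hx
  simp only [norm_indicator_eq_indicator_norm]
  exact Set.indicator_le_indicator hx

theorem UniformIntegrable.mono (hg : UniformIntegrable g p μ)
    (hf : ∀ i, AEStronglyMeasurable (f i) μ) (hfg : ∀ i, ∀ᵐ x ∂μ, ‖f i x‖ ≤ ‖g i x‖) :
    UniformIntegrable f p μ := by
  obtain ⟨-, hgu, C, hC⟩ := hg
  exact ⟨hf, hgu.mono hfg, C, fun i => (eLpNorm_mono_ae (hfg i)).trans (hC i)⟩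

end MeasureTheory

namespace Real

theorem mul_log_convexCombination_one_le {t x : ℝ} (hx : 0 ≤ x) (ht₀ : 0 ≤ t) (ht₁ : t ≤ 1) :
    (t * x + (1 - t)) * log (t * x + (1 - t)) ≤ t * (x * log x) := by
  simpa using convexOn_mul_log.2 (Set.mem_Ici.2 hx) (Set.mem_Ici.2 zero_le_one) ht₀
    (sub_nonneg.2 ht₁) (add_sub_cancel t 1)

theorem abs_mul_log_smoothed_le {x ε : ℝ} (hx : 0 ≤ x) (hε : 0 ≤ ε) :
    |(x + ε) / (1 + ε) * log ((x + ε) / (1 + ε))| ≤ |x * log x| + 1 := by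
  set t := 1 / (1 + ε)
  have ht₀ : 0 ≤ t := by positivity
  have ht₁ : t ≤ 1 := div_le_one_of_le₀ (by linarith) (by linarith)
  have hcomb : (x + ε) / (1 + ε) = t * x + (1 - t) := by
    simp only [t]
    field_simp
    ring
  rw [hcomb, abs_le]
  constructor
  · linarith [self_sub_one_le_mul_log (by positivity : 0 ≤ t * x + (1 - t)),
      abs_nonneg (x * log x), mul_nonneg ht₀ hx]
  · calc (t * x + (1 - t)) * log (t * x + (1 - t)) ≤ t * (x * log x) :=
          mul_log_convexCombination_one_le hx ht₀ ht₁
      _ ≤ t * |x * log x| := mul_le_mul_of_nonneg_left (le_abs_self _) ht₀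
      _ ≤ |x * log x| := mul_le_of_le_one_left (abs_nonneg _) ht₁
      _ ≤ |x * log x| + 1 := by linarith

end Real

theorem uniformIntegrable_smoothed_LlogL_general
    {Ω : Type*} [MeasurableSpace Ω] (P : Measure Ω) [IsProbabilityMeasure P]
    (L : Ω → ℝ) (hLm : Measurable L) (hL0 : ∀ ω, 0 ≤ L ω)
    (hLlogL : Integrable (fun ω => L ω * Real.log (L ω)) P)
    (ε₀ : ℝ) :
    UniformIntegrable
      (fun (ε : Set.Ioc (0 : ℝ) ε₀) (ω : Ω) =>
        ((L ω + (ε : ℝ)) / (1 + (ε : ℝ))) * Real.log ((L ω + (ε : ℝ)) / (1 + (ε : ℝ))))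
      1 P := by
  have hdom : MemLp (fun ω => |L ω * Real.log (L ω)| + 1) 1 P :=
    memLp_one_iff_integrable.2 (hLlogL.abs.add (integrable_const 1))
  refine (uniformIntegrable_const (ι := Set.Ioc (0 : ℝ) ε₀) le_rfl ENNReal.one_ne_top hdom).mono
    (fun ε => by fun_prop) (fun ε => Filter.Eventually.of_forall fun ω => ?_)
  simpa only [Real.norm_eq_abs, abs_of_nonneg (by positivity : 0 ≤ |L ω * Real.log (L ω)| + 1)]
    using Real.abs_mul_log_smoothed_le (hL0 ω) ε.2.1.le

/-- Let `L ≥ 0` with `∫ L dP = 1` and `∫ L log L dP < ∞` (i.e. `L log L` is `P`-integrable).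
For `ε > 0` set `L_ε = (L + ε)/(1 + ε)`. Then for any `ε₀ > 0`, the family
`{ L_ε log L_ε : 0 < ε ≤ ε₀ }` is uniformly integrable with respect to `P`. -/
theorem uniformIntegrable_smoothed_LlogL
    {Ω : Type*} [MeasurableSpace Ω] (P : Measure Ω) [IsProbabilityMeasure P]
    (L : Ω → ℝ) (hLm : Measurable L) (hL0 : ∀ ω, 0 ≤ L ω)
    (hL1 : (∫ ω, L ω ∂P) = 1)
    (hLlogL : Integrable (fun ω => L ω * Real.log (L ω)) P)
    (ε₀ : ℝ) (hε₀ : 0 < ε₀) :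
    UniformIntegrable
      (fun (ε : Set.Ioc (0 : ℝ) ε₀) (ω : Ω) =>
        ((L ω + (ε : ℝ)) / (1 + (ε : ℝ))) * Real.log ((L ω + (ε : ℝ)) / (1 + (ε : ℝ))))
      1 P :=
  uniformIntegrable_smoothed_LlogL_general P L hLm hL0 hLlogL ε₀
end

section
/- Let d ≥ 2, γ > 0, let C = { x ∈ ℝ^d : x¹ < x² < ⋯ < x^d }, and define b : C → ℝ^d by b^i(x) = γ · Σ_{j ≠ i} 1/(x^i − x^j) for i = 1, …, d. Then b is dissipative on C: for all x, y ∈ C, Σ_{i=1}^d (b^i(x) − b^i(y)) (x^i − y^i) ≤ 0. -/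
/-!
Writing `F i j = (xⁱ − xʲ)⁻¹ − (yⁱ − yʲ)⁻¹`, which is antisymmetric in `i, j`, and symmetrising
the double sum, twice the left-hand side becomes `Σ_{i ≠ j} (u⁻¹ − v⁻¹)(u − v)` with
`u = xⁱ − xʲ`, `v = yⁱ − yʲ`. Since `x` and `y` order the indices in the same way, `u v > 0`,
and then `(u⁻¹ − v⁻¹)(u − v) = −(u − v)² / (u v) ≤ 0` termwise.
-/

open Finset

lemma inv_sub_inv_mul_sub_nonpos {K : Type*} [Field K] [LinearOrder K] [IsStrictOrderedRing K]
    {u v : K} (h : 0 < u * v) : (u⁻¹ - v⁻¹) * (u - v) ≤ 0 := by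
  have hu : u ≠ 0 := left_ne_zero_of_mul h.ne'
  have hv : v ≠ 0 := right_ne_zero_of_mul h.ne'
  have hsq : (u⁻¹ - v⁻¹) * (u - v) = -((u - v) ^ 2 / (u * v)) := by
    field_simp
    ring
  rw [hsq, neg_nonpos]
  exact div_nonneg (sq_nonneg _) h.le

lemma StrictMono.sub_mul_sub_pos {ι R : Type*} [LinearOrder ι] [Ring R] [LinearOrder R]
    [IsStrictOrderedRing R] {x y : ι → R} (hx : StrictMono x) (hy : StrictMono y) {i j : ι}
    (hij : i ≠ j) : 0 < (x i - x j) * (y i - y j) := by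
  rcases hij.lt_or_gt with h | h
  · exact mul_pos_of_neg_of_neg (sub_neg.2 (hx h)) (sub_neg.2 (hy h))
  · exact mul_pos (sub_pos.2 (hx h)) (sub_pos.2 (hy h))

section OffDiagonal

variable {ι : Type*} [Fintype ι] [DecidableEq ι]

lemma sum_sum_filter_ne_comm {M : Type*} [AddCommMonoid M] (G : ι → ι → M) :
    ∑ i, ∑ j ∈ univ.filter (· ≠ i), G j i = ∑ i, ∑ j ∈ univ.filter (· ≠ i), G i j :=
  sum_comm' fun i j => by simp [ne_comm]

lemma two_mul_sum_sum_filter_ne_mul_of_antisymm {R : Type*} [CommRing R] {F : ι → ι → R}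
    (hF : ∀ i j, F j i = -F i j) (z : ι → R) :
    2 * ∑ i, ∑ j ∈ univ.filter (· ≠ i), F i j * z i
      = ∑ i, ∑ j ∈ univ.filter (· ≠ i), F i j * (z i - z j) := by
  have hswap : ∑ i, ∑ j ∈ univ.filter (· ≠ i), F i j * z j
      = -∑ i, ∑ j ∈ univ.filter (· ≠ i), F i j * z i := by
    rw [← sum_sum_filter_ne_comm, ← sum_neg_distrib]
    exact sum_congr rfl fun i _ => by
      rw [← sum_neg_distrib]
      exact sum_congr rfl fun j _ => by rw [hF, neg_mul]
  rw [two_mul]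
  simp only [mul_sub, sum_sub_distrib, hswap, sub_neg_eq_add]

end OffDiagonal

def dysonDrift {ι K : Type*} [Fintype ι] [DecidableEq ι] [Field K]
    (x : ι → K) (i : ι) : K :=
  ∑ j ∈ univ.filter (· ≠ i), (x i - x j)⁻¹

theorem sum_dysonDrift_sub_mul_sub_nonpos {ι K : Type*} [Fintype ι] [LinearOrder ι] [Field K]
    [LinearOrder K] [IsStrictOrderedRing K] {x y : ι → K} (hx : StrictMono x)
    (hy : StrictMono y) :
    ∑ i, (dysonDrift x i - dysonDrift y i) * (x i - y i) ≤ 0 := by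
  set F : ι → ι → K := fun i j => (x i - x j)⁻¹ - (y i - y j)⁻¹
  have hF : ∀ i j, F j i = -F i j := fun i j => by
    simp only [F]
    rw [← neg_sub (x i), ← neg_sub (y i), inv_neg, inv_neg]
    ring
  have hpair : ∀ i, ∀ j ∈ univ.filter (· ≠ i), F i j * ((x i - y i) - (x j - y j)) ≤ 0 := by
    intro i j hj
    have hij : i ≠ j := (mem_filter.1 hj).2.symm
    calc F i j * ((x i - y i) - (x j - y j))
        = ((x i - x j)⁻¹ - (y i - y j)⁻¹) * ((x i - x j) - (y i - y j)) := by ring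
      _ ≤ 0 := inv_sub_inv_mul_sub_nonpos (hx.sub_mul_sub_pos hy hij)
  have htwice : 2 * ∑ i, (dysonDrift x i - dysonDrift y i) * (x i - y i) ≤ 0 := by
    simp only [dysonDrift, ← sum_sub_distrib, sum_mul]
    rw [two_mul_sum_sum_filter_ne_mul_of_antisymm hF]
    exact sum_nonpos fun i _ => sum_nonpos (hpair i)
  linarith

theorem dyson_drift_dissipative_general
    (d : ℕ) (γ : ℝ) (hγ : 0 < γ)
    (b : (Fin d → ℝ) → (Fin d → ℝ))
    (hb : ∀ x : Fin d → ℝ, ∀ i : Fin d,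
      b x i = γ * ∑ j ∈ Finset.univ.filter (fun j : Fin d => j ≠ i), (x i - x j)⁻¹)
    (x y : Fin d → ℝ) (hx : StrictMono x) (hy : StrictMono y) :
    ∑ i : Fin d, (b x i - b y i) * (x i - y i) ≤ 0 := by
  have hb_drift : ∀ x i, b x i = γ * dysonDrift x i := hb
  calc ∑ i : Fin d, (b x i - b y i) * (x i - y i)
      = γ * ∑ i, (dysonDrift x i - dysonDrift y i) * (x i - y i) := by
        simp only [hb_drift, ← mul_sub, mul_assoc, mul_sum]
    _ ≤ 0 := mul_nonpos_of_nonneg_of_nonpos hγ.le (sum_dysonDrift_sub_mul_sub_nonpos hx hy)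

/-- The singular interaction drift `bⁱ(x) = γ · Σ_{j ≠ i} 1/(xⁱ − xʲ)` of the Dyson-type
SDE is dissipative on the Weyl chamber `C = {x : x¹ < ⋯ < x^d}`:
`Σ_i (bⁱ(x) − bⁱ(y)) (xⁱ − yⁱ) ≤ 0` for all `x, y ∈ C`. -/
theorem dyson_drift_dissipative
    (d : ℕ) (hd : 2 ≤ d) (γ : ℝ) (hγ : 0 < γ)
    (b : (Fin d → ℝ) → (Fin d → ℝ))
    (hb : ∀ x : Fin d → ℝ, ∀ i : Fin d,
      b x i = γ * ∑ j ∈ Finset.univ.filter (fun j : Fin d => j ≠ i), (x i - x j)⁻¹)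
    (x y : Fin d → ℝ) (hx : StrictMono x) (hy : StrictMono y) :
    ∑ i : Fin d, (b x i - b y i) * (x i - y i) ≤ 0 :=
  dyson_drift_dissipative_general d γ hγ b hb x y hx hy
end
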